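/- arXiv:2602.12128 — 2 statements merged into one kernel-verified Lean document; each statement's English description precedes it below -/
import Mathlib

section
/- Let Q, K₁, K₂ ∈ ℝ^{N×d} and V ∈ ℝ^{N×d'}. Define A = (Q K₁ᵀ) ⊙ (Q K₂ᵀ). Then for every i ∈ {1,…,N} and j ∈ {1,…,d'}, (A·V)_{ij} = Σ_{l,m=1}^d Q_{il} Q_{im} · C_{lmj}, where C_{lmj} = Σ_{s=1}^N (K₁)_{sl} (K₂)_{sm} V_{sj}. -/
open Matrix

theorem hla_two_factor_context (N d d' : ℕ)
    (Q K1 K2 : Matrix (Fin N) (Fin d) ℝ) (V : Matrix (Fin N) (Fin d') ℝ)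
    (A : Matrix (Fin N) (Fin N) ℝ)
    (hA : A = (Q * K1ᵀ) ⊙ (Q * K2ᵀ))
    (C : Fin d → Fin d → Fin d' → ℝ)
    (hC : ∀ l m j, C l m j = ∑ s, K1 s l * K2 s m * V s j) :
    ∀ (i : Fin N) (j : Fin d'),
      (A * V) i j = ∑ l, ∑ m, Q i l * Q i m * C l m j := by
  intro i j
  simp only [hA, hC, mul_apply, hadamard_apply, transpose_apply,
    Finset.mul_sum, Finset.sum_mul]
  rw [Finset.sum_comm]
  conv_lhs => rw [show (fun (y:Fin d) => ∑ x : Fin N, ∑ i1 : Fin d, Q i i1 * K1 x i1 * (Q i y * K2 x y) * V x j) = (fun y => ∑ i1 : Fin d, ∑ x : Fin N, Q i i1 * K1 x i1 * (Q i y * K2 x y) * V x j) from funext fun y => Finset.sum_comm ..]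
  rw [Finset.sum_comm]
  refine Finset.sum_congr rfl fun l _ => ?_
  refine Finset.sum_congr rfl fun m _ => ?_
  refine Finset.sum_congr rfl fun s _ => ?_
  ring
end

section
/- Define context tensors recursively by C¹_{l₁⋯l_F m} = (∏_f (K_f)_{1 l_f}) · V_{1m} and Cⁱ = Cⁱ⁻¹ + (∏_f (K_f)_{i l_f}) · V_{im} for i ≥ 2. Then for every n, Cⁿ_{l₁⋯l_F m} = Σ_{s=1}^n (∏_{f=1}^F (K_f)_{s l_f}) V_{sm}, and hence the output oⁿ = Σ_{l₁,…,l_F} (∏_f Q_{n l_f}) Cⁿ_{l₁⋯l_F m} equals the n-th row of the causal HLA output, i.e., Σ_{s=1}^n (∏_f (Q K_fᵀ)_{ns}) V_{sm}. -/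
theorem hla_sequential_update (d d' F : ℕ)
    (Q : ℕ → Fin d → ℝ) (K : Fin F → ℕ → Fin d → ℝ) (V : ℕ → Fin d' → ℝ)
    (C : ℕ → (Fin F → Fin d) → Fin d' → ℝ)
    (hC0 : ∀ l m, C 0 l m = (∏ f, K f 0 (l f)) * V 0 m)
    (hCs : ∀ i l m, C (i + 1) l m = C i l m + (∏ f, K f (i + 1) (l f)) * V (i + 1) m) :
    ∀ (n : ℕ) (l : Fin F → Fin d) (m : Fin d'),
      C n l m = ∑ s ∈ Finset.range (n + 1), (∏ f, K f s (l f)) * V s m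
      ∧ (∑ l' : Fin F → Fin d, (∏ f, Q n (l' f)) * C n l' m)
          = ∑ s ∈ Finset.range (n + 1),
              (∏ f, ∑ t, Q n t * K f s t) * V s m := by
  have hCn : ∀ (n : ℕ) (l : Fin F → Fin d) (m : Fin d'),
      C n l m = ∑ s ∈ Finset.range (n + 1), (∏ f, K f s (l f)) * V s m := by
    intro n
    induction n with
    | zero => intro l m; simp [hC0]
    | succ i ih =>
      intro l m
      rw [hCs, ih, ← Finset.sum_range_succ]
  intro n l m
  refine ⟨hCn n l m, ?_⟩
  have key : ∀ s, (∏ f, ∑ t, Q n t * K f s t)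
      = ∑ l' : Fin F → Fin d, ∏ f, Q n (l' f) * K f s (l' f) := by
    intro s
    rw [Finset.prod_univ_sum]
    simp
  calc (∑ l' : Fin F → Fin d, (∏ f, Q n (l' f)) * C n l' m)
      = ∑ l' : Fin F → Fin d, ∑ s ∈ Finset.range (n + 1),
          (∏ f, Q n (l' f) * K f s (l' f)) * V s m := by
        refine Finset.sum_congr rfl fun l' _ => ?_
        rw [hCn n l' m, Finset.mul_sum]
        refine Finset.sum_congr rfl fun s _ => ?_
        rw [Finset.prod_mul_distrib]; ring
    _ = ∑ s ∈ Finset.range (n + 1),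
          (∑ l' : Fin F → Fin d, ∏ f, Q n (l' f) * K f s (l' f)) * V s m := by
        rw [Finset.sum_comm]
        refine Finset.sum_congr rfl fun s _ => ?_
        rw [Finset.sum_mul]
    _ = ∑ s ∈ Finset.range (n + 1), (∏ f, ∑ t, Q n t * K f s t) * V s m := by
        simp [key]
end
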